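/- arXiv:2207.00398 — 2 statements merged into one kernel-verified Lean document; each statement's English description precedes it below -/
import Mathlib

section
/- In the Krasner F^(2,3)-hyperring R = [0,1] with f(a,b) = χ_{max(a,b)} if a ≠ b and f(a,a) = χ_{[0,a]}, and g(a,b,c) = (a·b·c)_t for a fixed t ∈ (0,1], the F-hyperideal I = [0, 0.5] is a primary F-hyperideal of R but not a prime F-hyperideal of R. -/
open Set

/-- A fuzzy subset of `R`: a map into the unit interval. -/
abbrev FS (R : Type*) := R → unitInterval

/-- The support of a fuzzy subset. -/
def fsupp {R : Type*} (μ : FS R) : Set R := {a | μ a ≠ 0}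

/-- Support of a `k`-ary F-(hyper)operation applied to set-valued arguments:
`supp(h(S₁,…,S_k)) = ⋃_{aᵢ ∈ Sᵢ} supp(h(a₁,…,a_k))`. -/
def setExt {R : Type*} {k : ℕ} (h : (Fin k → R) → FS R) (S : Fin k → Set R) : Set R :=
  ⋃ a ∈ {a : Fin k → R | ∀ i, a i ∈ S i}, fsupp (h a)

/-- Argument list for the associativity axiom: the `k`-ary operation `h` applied to the
sequence `c` (of `2k-1` entries) with the result of `h` on a window of `k` consecutive
entries inserted at position `i`. -/
def nestArgs {R : Type*} (k : ℕ) (h : (Fin k → R) → FS R) (c : ℕ → R) (i : ℕ) :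
    Fin k → Set R :=
  fun j => if (j : ℕ) < i then {c j}
    else if (j : ℕ) = i then fsupp (h (fun l => c (i + (l : ℕ))))
    else {c ((j : ℕ) + k - 1)}

/-- A (commutative) Krasner F^(m,n)-hyperring: a canonical F^m-hypergroup `(R,f)` with
F-identity `e` and inverses, an associative commutative F^n-operation `g` distributive
over `f`, with `e` absorbing for `g`. (Axioms are stated at the level of supports.) -/
structure KrasnerFmn (R : Type*) (m n : ℕ) where
  f : (Fin m → R) → FS R
  g : (Fin n → R) → FS R
  e : R
  inv : R → R
  f_nonzero : ∀ a, (fsupp (f a)).Nonempty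
  g_nonzero : ∀ a, (fsupp (g a)).Nonempty
  f_assoc : ∀ (c : ℕ → R) (i j : ℕ), i < m → j < m →
    setExt f (nestArgs m f c i) = setExt f (nestArgs m f c j)
  f_comm : ∀ (a : Fin m → R) (σ : Equiv.Perm (Fin m)), f a = f (a ∘ σ)
  f_id : ∀ a : R, fsupp (f (fun i => if (i : ℕ) = 0 then a else e)) = {a}
  f_rev : ∀ (a : Fin m → R) (b : R) (i : Fin m), b ∈ fsupp (f a) →
    a i ∈ fsupp (f (Function.update (fun j => inv (a j)) i b))
  g_assoc : ∀ (c : ℕ → R) (i j : ℕ), i < n → j < n →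
    setExt g (nestArgs n g c i) = setExt g (nestArgs n g c j)
  g_comm : ∀ (a : Fin n → R) (σ : Equiv.Perm (Fin n)), g a = g (a ∘ σ)
  distrib : ∀ (x : Fin n → R) (a : Fin m → R) (i : Fin n),
    setExt g (Function.update (fun j => ({x j} : Set R)) i (fsupp (f a))) =
    setExt f (fun k => fsupp (g (Function.update x i (a k))))
  g_absorb : ∀ (x : Fin n → R) (i : Fin n), x i = e → fsupp (g x) = {e}

namespace KrasnerFmn

variable {R : Type*} {m n : ℕ}

/-- `I` is an F-hyperideal of the Krasner F^(m,n)-hyperring `K`. -/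
structure IsFHyperideal (K : KrasnerFmn R m n) (I : Set R) : Prop where
  e_mem : K.e ∈ I
  inv_mem : ∀ a ∈ I, K.inv a ∈ I
  f_closed : ∀ a : Fin m → R, (∀ i, a i ∈ I) → fsupp (K.f a) ⊆ I
  g_absorb : ∀ (x : Fin n → R) (i : Fin n),
    setExt K.g (Function.update (fun j => ({x j} : Set R)) i I) ⊆ I

/-- Prime F-hyperideal (elementwise characterization). -/
def IsPrimeF (K : KrasnerFmn R m n) (P : Set R) : Prop :=
  K.IsFHyperideal P ∧ ∀ a : Fin n → R, fsupp (K.g a) ⊆ P → ∃ i, a i ∈ P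

/-- Maximal F-hyperideal. -/
def IsMaximalF (K : KrasnerFmn R m n) (M : Set R) : Prop :=
  K.IsFHyperideal M ∧ M ≠ univ ∧
    ∀ N : Set R, K.IsFHyperideal N → M ⊆ N → N = M ∨ N = univ

/-- The Jacobson radical: the intersection of all maximal F-hyperideals
(`= R` when there are none). -/
def JacobsonF (K : KrasnerFmn R m n) : Set R := ⋂₀ {M | K.IsMaximalF M}

/-- `e'` is a scalar F-identity: `supp(g(a, e'^(n-1))) = {a}`. -/
def IsScalarId (K : KrasnerFmn R m n) (e' : R) : Prop :=
  ∀ a : R, fsupp (K.g (fun i => if (i : ℕ) = 0 then a else e')) = {a}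

/-- `x` is F-invertible: `supp(g(x, y, e'^(n-2))) = {e'}` for some `y`. -/
def FInvertible (K : KrasnerFmn R m n) (e' : R) (x : R) : Prop :=
  ∃ y : R, fsupp (K.g (fun i =>
    if (i : ℕ) = 0 then x else if (i : ℕ) = 1 then y else e')) = {e'}

/-- The F-radical of `Q`: intersection of all prime F-hyperideals containing `Q`
(`= R` when there are none). -/
def FRadical (K : KrasnerFmn R m n) (Q : Set R) : Set R :=
  ⋂₀ {P | K.IsPrimeF P ∧ Q ⊆ P}

/-- The coset `supp(f(a, I, e^(m-2)))` of `a` modulo `I`. -/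
def cosetF (K : KrasnerFmn R m n) (I : Set R) (a : R) : Set R :=
  setExt K.f (fun i => if (i : ℕ) = 0 then {a}
    else if (i : ℕ) = 1 then I else {K.e})

/-- The coset `supp(f(S, I, e^(m-2)))` of a set `S` modulo `I`. -/
def cosetSetF (K : KrasnerFmn R m n) (I : Set R) (S : Set R) : Set R :=
  setExt K.f (fun i => if (i : ℕ) = 0 then S
    else if (i : ℕ) = 1 then I else {K.e})

/-- The set `⟨x⟩_F = {a ∈ supp(g(r, x, e'^(n-2))) : r ∈ R}`. -/
def genF (K : KrasnerFmn R m n) (e' : R) (x : R) : Set R :=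
  {a | ∃ r : R, a ∈ fsupp (K.g (fun i =>
    if (i : ℕ) = 0 then r else if (i : ℕ) = 1 then x else e'))}

/-- Homomorphism of Krasner F^(m,n)-hyperrings. -/
structure IsFHom {R₁ R₂ : Type*} (K₁ : KrasnerFmn R₁ m n) (K₂ : KrasnerFmn R₂ m n)
    (h : R₁ → R₂) : Prop where
  map_e : h K₁.e = K₂.e
  map_f : ∀ x : Fin m → R₁, h '' fsupp (K₁.f x) = fsupp (K₂.f (h ∘ x))
  map_g : ∀ y : Fin n → R₁, h '' fsupp (K₁.g y) = fsupp (K₂.g (h ∘ y))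

/-- `supp(g_(l)(a^(l(n-1)+1)))`, the support of the `l`-fold iterate of `g`
applied to copies of `a` (with `gIterPow K a 0 = {a}`). -/
def gIterPow (K : KrasnerFmn R m n) (a : R) : ℕ → Set R
  | 0 => {a}
  | l + 1 => setExt K.g (fun i => if (i : ℕ) = 0 then K.gIterPow a l else {a})

/-- Primary F-hyperideal (fuzzy-subset definition). -/
def IsPrimaryF (K : KrasnerFmn R m n) (e' : R) (Q : Set R) : Prop :=
  K.IsFHyperideal Q ∧ ∀ μ : Fin n → FS R, (∀ i, (fsupp (μ i)).Nonempty) →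
    setExt K.g (fun i => fsupp (μ i)) ⊆ Q →
    ∃ i, fsupp (μ i) ⊆ Q ∨
      setExt K.g (Function.update (fun j => fsupp (μ j)) i ({e'} : Set R)) ⊆ K.FRadical Q

/-- Primary F-hyperideal (elementwise characterization). -/
def IsPrimaryElem (K : KrasnerFmn R m n) (e' : R) (Q : Set R) : Prop :=
  K.IsFHyperideal Q ∧ ∀ a : Fin n → R, fsupp (K.g a) ⊆ Q →
    ∃ i, a i ∈ Q ∨ fsupp (K.g (Function.update a i e')) ⊆ K.FRadical Q

end KrasnerFmn

/-!
For the max-hyperoperation `f`, the F-identity is the bottom element and every element is its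
own inverse, so every down-set `[0, c]` is an F-hyperideal. As `g` multiplies, a prime
F-hyperideal containing `[0, c]` with `c > 0` contains every `y < 1`, because some `y ^ 3 ^ k`
lies below `c`. Hence if `a₀a₁a₂ ≤ c < a₀`, then `a₁a₂ < 1` lies in the F-radical, so `[0, c]`
is primary; it is not prime since `0.8 · 0.7 · 0.6 ≤ 0.5`.
-/

theorem fsupp_ite_eq {R : Type*} [DecidableEq R] {t : unitInterval} (ht : t ≠ 0) (a : R) :
    fsupp (fun y => if y = a then t else 0) = {a} := by
  ext y
  by_cases h : y = a <;> simp [fsupp, h, ht]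

section MaxFOp

variable {R : Type*} [LinearOrder R]

def maxFOp (x : Fin 2 → R) : FS R := fun y =>
  if x 0 = x 1 then (if y ≤ x 0 then 1 else 0) else (if y = max (x 0) (x 1) then 1 else 0)

theorem fsupp_maxFOp_of_ne {x : Fin 2 → R} (h : x 0 ≠ x 1) :
    fsupp (maxFOp x) = {max (x 0) (x 1)} := by
  ext y
  simp [fsupp, maxFOp, h]

theorem fsupp_maxFOp_subset_Iic (x : Fin 2 → R) : fsupp (maxFOp x) ⊆ Iic (max (x 0) (x 1)) := by
  by_cases h : x 0 = x 1
  · intro y hy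
    simp_all [fsupp, maxFOp]
  · simp [fsupp_maxFOp_of_ne h]

end MaxFOp

namespace KrasnerFmn

variable {R : Type*} [LinearOrder R] [OrderBot R] {n : ℕ} {K : KrasnerFmn R 2 n}

theorem e_eq_bot_of_f_eq_maxFOp (hf : K.f = maxFOp) : K.e = ⊥ := by
  by_contra hne
  have h := K.f_id ⊥
  rw [hf, fsupp_maxFOp_of_ne (by simpa using Ne.symm hne)] at h
  simp_all

theorem inv_eq_self_of_f_eq_maxFOp (hf : K.f = maxFOp) (a : R) : K.inv a = a := by
  set x : Fin 2 → R := fun i => if (i : ℕ) = 0 then a else K.e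
  have hrev := K.f_rev x a 1 (by rw [K.f_id a]; rfl)
  by_contra hne
  rw [hf, fsupp_maxFOp_of_ne (by simpa [x] using hne)] at hrev
  simp only [x, Fin.val_eq_zero_iff, Fin.isValue, e_eq_bot_of_f_eq_maxFOp hf, ne_eq,
    zero_ne_one, not_false_eq_true, Function.update_of_ne, ↓reduceIte, Function.update_self,
    one_ne_zero, mem_singleton_iff] at hrev
  obtain ⟨hinv, ha⟩ := max_eq_bot.1 hrev.symm
  exact hne (hinv.trans ha.symm)

end KrasnerFmn

section UnitInterval

open unitInterval

theorem mul_mul_le_apply (a : Fin 3 → unitInterval) (i : Fin 3) : a 0 * a 1 * a 2 ≤ a i := by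
  fin_cases i
  · exact mul_le_left.trans mul_le_left
  · exact mul_le_left.trans mul_le_right
  · exact mul_le_right

namespace KrasnerFmn

variable {K : KrasnerFmn unitInterval 2 3}

theorem isFHyperideal_Iic (hf : K.f = maxFOp) (hg : ∀ x, fsupp (K.g x) = {x 0 * x 1 * x 2})
    (c : unitInterval) : K.IsFHyperideal (Iic c) where
  e_mem := by simp [e_eq_bot_of_f_eq_maxFOp hf]
  inv_mem a ha := by rwa [inv_eq_self_of_f_eq_maxFOp hf]
  f_closed a ha := hf ▸ (fsupp_maxFOp_subset_Iic a).trans (Iic_subset_Iic.2 (max_le (ha 0) (ha 1)))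
  g_absorb x i := by
    simp only [setExt, iUnion_subset_iff, hg, singleton_subset_iff]
    intro a ha
    exact (mul_mul_le_apply a i).trans (by simpa using ha i)

theorem IsPrimeF.mem_of_pow_three_pow_mem (hg : ∀ x, fsupp (K.g x) = {x 0 * x 1 * x 2})
    {P : Set unitInterval} (hP : K.IsPrimeF P) {y : unitInterval} (k : ℕ)
    (hk : y ^ 3 ^ k ∈ P) : y ∈ P := by
  induction k with
  | zero => simpa using hk
  | succ k ih =>
    apply ih
    have hcube : fsupp (K.g fun _ => y ^ 3 ^ k) ⊆ P := by
      rw [hg, singleton_subset_iff, ← pow_three', ← pow_mul, ← pow_succ]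
      exact hk
    obtain ⟨_, h⟩ := hP.2 _ hcube
    exact h

theorem Iio_one_subset_fRadical_Iic (hg : ∀ x, fsupp (K.g x) = {x 0 * x 1 * x 2})
    {c : unitInterval} (hc : 0 < c) : Iio 1 ⊆ K.FRadical (Iic c) := by
  rintro y (hy : y < 1) P ⟨hP, hcP⟩
  obtain ⟨k, hk⟩ := exists_pow_lt_of_lt_one (coe_pos.2 hc) (coe_lt_one.2 hy)
  rw [← Set.Icc.coe_pow, Subtype.coe_lt_coe] at hk
  refine hP.mem_of_pow_three_pow_mem hg k (hcP ?_)
  exact (pow_le_pow_right_of_le_one' le_one' (Nat.lt_pow_self (by norm_num)).le).trans hk.le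

theorem isPrimaryElem_Iic (hf : K.f = maxFOp) (hg : ∀ x, fsupp (K.g x) = {x 0 * x 1 * x 2})
    {c : unitInterval} (hc : 0 < c) : K.IsPrimaryElem 1 (Iic c) := by
  refine ⟨isFHyperideal_Iic hf hg c, fun a ha => ⟨0, ?_⟩⟩
  rw [hg, singleton_subset_iff] at ha
  by_cases h0 : a 0 ≤ c
  · exact Or.inl h0
  refine Or.inr ?_
  rw [hg, singleton_subset_iff]
  apply Iio_one_subset_fRadical_Iic hg hc
  rw [Function.update_self, Function.update_of_ne (by decide), Function.update_of_ne (by decide),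
    one_mul]
  refine lt_of_le_of_ne le_one' fun h12 => h0 ?_
  simpa [mul_assoc, h12] using ha

end KrasnerFmn

end UnitInterval

open Classical in
theorem stmt16_general (K : KrasnerFmn unitInterval 2 3) (t : unitInterval) (ht : t ≠ 0)
    (hf : ∀ x : Fin 2 → unitInterval, K.f x = fun y =>
      if x 0 = x 1 then (if y ≤ x 0 then 1 else 0)
      else (if y = max (x 0) (x 1) then 1 else 0))
    (hg : ∀ x : Fin 3 → unitInterval, K.g x = fun y =>
      if y = x 0 * x 1 * x 2 then t else 0) :
    K.IsPrimaryElem 1 {x : unitInterval | (x : ℝ) ≤ 0.5} ∧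
      ¬ K.IsPrimeF {x : unitInterval | (x : ℝ) ≤ 0.5} := by
  have hg' : ∀ x, fsupp (K.g x) = {x 0 * x 1 * x 2} := fun x => by
    rw [hg x]
    exact fsupp_ite_eq ht _
  refine ⟨K.isPrimaryElem_Iic (c := ⟨0.5, by norm_num⟩) (funext hf) hg'
    (unitInterval.coe_pos.1 (by norm_num)), ?_⟩
  rintro ⟨-, hprime⟩
  obtain ⟨i, hi⟩ := hprime ![⟨0.8, by norm_num⟩, ⟨0.7, by norm_num⟩, ⟨0.6, by norm_num⟩] (by
    rw [hg', singleton_subset_iff]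
    norm_num [Matrix.cons_val_two])
  fin_cases i <;> norm_num at hi

open Classical in
/-- In the Krasner F^(2,3)-hyperring on `[0,1]` with
`f(a,b) = χ_{max(a,b)}` for `a ≠ b`, `f(a,a) = χ_{[0,a]}`, and `g(a,b,c) = (a·b·c)_t`,
the F-hyperideal `I = [0, 0.5]` is primary but not prime. -/
theorem stmt16 (K : KrasnerFmn unitInterval 2 3) (t : unitInterval) (ht : t ≠ 0)
    (hf : ∀ x : Fin 2 → unitInterval, K.f x = fun y =>
      if x 0 = x 1 then (if y ≤ x 0 then 1 else 0)
      else (if y = max (x 0) (x 1) then 1 else 0))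
    (hg : ∀ x : Fin 3 → unitInterval, K.g x = fun y =>
      if y = x 0 * x 1 * x 2 then t else 0)
    (he' : K.IsScalarId 1) :
    K.IsPrimaryElem 1 {x : unitInterval | (x : ℝ) ≤ 0.5} ∧
      ¬ K.IsPrimeF {x : unitInterval | (x : ℝ) ≤ 0.5} :=
  stmt16_general K t ht hf hg
end

section
/- Let I be a normal F-hyperideal of a Krasner F^(m,n)-hyperring (R,f,g) and J an F-hyperideal of R containing I. If J is a prime F-hyperideal of R, then the induced F-hyperideal [J:I*] is a prime F-hyperideal of the quotient Krasner F^(m,n)-hyperring [R:I*] of I*-classes. -/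
open Set

/-- A normal F-hyperideal: an F-hyperideal `I` with
`supp(f(a, I, -a, e^(m-3))) ⊆ I` for all `a`. -/
def IsNormalFHyperideal {R : Type*} {m n : ℕ} (K : KrasnerFmn R m n) (I : Set R) :
    Prop :=
  K.IsFHyperideal I ∧ ∀ a : R,
    setExt K.f (fun i => if (i : ℕ) = 0 then {a} else if (i : ℕ) = 1 then I
      else if (i : ℕ) = 2 then {K.inv a} else {K.e}) ⊆ I

/-- If `I` is a normal F-hyperideal and `J ⊇ I` a prime F-hyperideal,
then `[J:I*]` is a prime F-hyperideal of the quotient `[R:I*]` of `I*`-classes: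
whenever the induced `g` of the classes `I*[x₁],…,I*[xₙ]`, namely
`{I*[y] : y ∈ supp(g(x₁,…,xₙ))}`, lies in `[J:I*] = {I*[z] : z ∈ J}`, some class
`I*[xᵢ]` lies in `[J:I*]`. -/
theorem stmt17 {R : Type*} {m n : ℕ} (K : KrasnerFmn R m n) (I : Set R)
    (hI : IsNormalFHyperideal K I) (J : Set R) (hJ : K.IsFHyperideal J) (hIJ : I ⊆ J)
    (hJp : K.IsPrimeF J) :
    ∀ x : Fin n → R,
      {S : Set R | ∃ y ∈ fsupp (K.g x), S = K.cosetF I y} ⊆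
          {S : Set R | ∃ z ∈ J, S = K.cosetF I z} →
        ∃ i, K.cosetF I (x i) ∈ {S : Set R | ∃ z ∈ J, S = K.cosetF I z} := by
  intro x hx
  have self_mem : ∀ y : R, y ∈ K.cosetF I y := by
    intro y
    have hy : y ∈ fsupp (K.f (fun i => if (i : ℕ) = 0 then y else K.e)) := by
      rw [K.f_id y]; exact rfl
    refine mem_iUnion₂.mpr ⟨fun i => if (i : ℕ) = 0 then y else K.e, fun i => ?_, hy⟩
    by_cases h0 : (i : ℕ) = 0
    · simp [h0]
    · by_cases h1 : (i : ℕ) = 1 <;> simp [h0, h1, hI.1.e_mem]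
  have hsub : fsupp (K.g x) ⊆ J := by
    intro y hy
    obtain ⟨z, hz, heq⟩ := hx ⟨y, hy, rfl⟩
    have hmem : y ∈ K.cosetF I z := heq ▸ self_mem y
    obtain ⟨a, ha, hya⟩ := mem_iUnion₂.mp hmem
    refine hJ.f_closed a (fun i => ?_) hya
    have hai := ha i
    by_cases h0 : (i : ℕ) = 0
    · simp [h0] at hai; exact hai ▸ hz
    · by_cases h1 : (i : ℕ) = 1
      · simp [h0, h1] at hai; exact hIJ hai
      · simp [h0, h1] at hai; exact hai ▸ hJ.e_mem
  obtain ⟨i, hi⟩ := hJp.2 x hsub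
  exact ⟨i, x i, hi, rfl⟩
end
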